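/- arXiv:1904.09592 — 4 statements merged into one kernel-verified Lean document; each statement's English description precedes it below -/
import Mathlib

section
/- Necessity of the 3-connectivity criterion: let Γ be a finite simple graph embedded in the 2-sphere with N ≥ 4 vertices, all lying on a Hamiltonian cycle γ whose edges are edges of Γ. If some pair of vertices v₁, v₂ is joined both by an edge of Γ lying (apart from its endpoints) in one open complementary region of γ and by an edge lying in the other open complementary region, then Γ is not 3-connected: removing v₁ and v₂ disconnects Γ. -/
/-!
The vertices `v₁`, `v₂` cut the cycle into two open arcs. A cycle edge can leave an arc only
through `v₁` or `v₂`, and a chord joining the two arcs would cross the chord `{v₁, v₂}` of its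
own region, which exists in both regions. So the arc from `v₁` to `v₂` is closed under
adjacency in `Γ ∖ {v₁, v₂}`; it contains `v₁ + 1` but not `v₂ + 1`, both of which survive the
deletion because `v₁`, `v₂` are not consecutive on the cycle.
-/

/-- `x` lies strictly between `a` and `b` going in the positive cyclic direction on
the Hamiltonian cycle `0, 1, …, N-1`. -/
def CyclicBtw {N : ℕ} (a b x : Fin N) : Prop :=
  x ≠ a ∧ x ≠ b ∧ (x - a).val < (b - a).val

/-- Two chords `{a, b}` and `{c, d}` of the cycle cross: `c` lies strictly on one of
the two arcs determined by `a` and `b`, and `d` strictly on the other. -/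
def ChordCross {N : ℕ} (a b c d : Fin N) : Prop :=
  CyclicBtw a b c ∧ CyclicBtw b a d

/-- A symmetric relation recording the chords drawn in one of the two complementary
regions of the Hamiltonian cycle in the sphere: chords join non-adjacent vertices of
the cycle, and (by planarity of the embedding) chords in the same region are pairwise
noncrossing. -/
def IsChordRel {N : ℕ} [NeZero N] (R : Fin N → Fin N → Prop) : Prop :=
  (∀ a b, R a b → R b a) ∧
  (∀ a b, R a b → a ≠ b ∧ b ≠ a + 1 ∧ a ≠ b + 1) ∧
  (∀ a b c d, R a b → R c d → ¬ ChordCross a b c d)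

theorem Fin.val_sub_eq_ite {N : ℕ} (a b : Fin N) :
    (a - b).val = if b ≤ a then a.val - b.val else N + a.val - b.val := by
  split_ifs with h
  · exact Fin.coe_sub_iff_le.2 h
  · exact Fin.coe_sub_iff_lt.2 (not_le.1 h)

theorem Fin.val_add_one_eq_ite {N : ℕ} [NeZero N] (a : Fin N) :
    (a + 1).val = if a.val + 1 = N then 0 else a.val + 1 := by
  obtain ⟨n, rfl⟩ := Nat.exists_eq_succ_of_ne_zero (NeZero.ne N)
  simp [Fin.val_add_one, Fin.ext_iff]

section CyclicBtw

variable {N : ℕ} {a b x : Fin N}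

theorem cyclicBtw_or_cyclicBtw_swap (hab : a ≠ b) (hxa : x ≠ a) (hxb : x ≠ b) :
    CyclicBtw a b x ∨ CyclicBtw b a x := by
  simp only [CyclicBtw, ne_eq, Fin.ext_iff, Fin.val_sub_eq_ite, Fin.le_def] at *
  split_ifs <;> omega

theorem CyclicBtw.not_swap (h : CyclicBtw a b x) : ¬ CyclicBtw b a x := by
  simp only [CyclicBtw, ne_eq, Fin.ext_iff, Fin.val_sub_eq_ite, Fin.le_def] at *
  split_ifs at * <;> omega

theorem cyclicBtw_add_one_iff [NeZero N] (hab : a ≠ b) :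
    CyclicBtw a b (x + 1) ↔ (x = a ∨ CyclicBtw a b x) ∧ x + 1 ≠ b := by
  simp only [CyclicBtw, ne_eq, Fin.ext_iff, Fin.val_sub_eq_ite, Fin.le_def,
    Fin.val_add_one_eq_ite] at *
  split_ifs <;> omega

theorem IsChordRel.cyclicBtw_of_rel [NeZero N] {R : Fin N → Fin N → Prop} (hR : IsChordRel R)
    (hab : R a b) {y : Fin N} (hxy : R x y) (hx : CyclicBtw a b x) (hya : y ≠ a) (hyb : y ≠ b) :
    CyclicBtw a b y :=
  (cyclicBtw_or_cyclicBtw_swap (hR.2.1 a b hab).1 hya hyb).resolve_right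
    fun hy => hR.2.2 a b x y hab hxy ⟨hx, hy⟩

end CyclicBtw

theorem SimpleGraph.Reachable.of_adj_closed {V : Type*} {G : SimpleGraph V} {P : V → Prop}
    {a b : V} (h : G.Reachable a b) (hP : ∀ x y, G.Adj x y → P x → P y) (ha : P a) : P b := by
  obtain ⟨w⟩ := h
  induction w with
  | nil => exact ha
  | cons hxy _ ih => exact ih (hP _ _ hxy ha)

theorem not_three_connected_of_double_chord_general (N : ℕ) [NeZero N]
    (G : SimpleGraph (Fin N)) (top bot : Fin N → Fin N → Prop)
    (htop : IsChordRel top) (hbot : IsChordRel bot)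
    (hadj : ∀ u v, G.Adj u v ↔ (v = u + 1 ∨ u = v + 1 ∨ top u v ∨ bot u v))
    (v₁ v₂ : Fin N) (h1 : top v₁ v₂) (h2 : bot v₁ v₂) :
    ¬ (G.induce {x : Fin N | x ≠ v₁ ∧ x ≠ v₂}).Connected := by
  obtain ⟨hne, hsucc₁, hsucc₂⟩ := htop.2.1 v₁ v₂ h1
  have hstart : CyclicBtw v₁ v₂ (v₁ + 1) :=
    (cyclicBtw_add_one_iff hne).2 ⟨.inl rfl, hsucc₁.symm⟩
  have hend : CyclicBtw v₂ v₁ (v₂ + 1) :=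
    (cyclicBtw_add_one_iff hne.symm).2 ⟨.inl rfl, hsucc₂.symm⟩
  have harc_closed : ∀ x y, G.Adj x y → y ≠ v₁ → y ≠ v₂ →
      CyclicBtw v₁ v₂ x → CyclicBtw v₁ v₂ y := by
    intro x y hxy hy₁ hy₂ hx
    rcases (hadj x y).1 hxy with rfl | rfl | hxy | hxy
    · exact (cyclicBtw_add_one_iff hne).2 ⟨.inr hx, hy₂⟩
    · exact ((cyclicBtw_add_one_iff hne).1 hx).1.resolve_left hy₁
    · exact htop.cyclicBtw_of_rel h1 hxy hx hy₁ hy₂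
    · exact hbot.cyclicBtw_of_rel h2 hxy hx hy₁ hy₂
  intro hconn
  have hreach := hconn.preconnected ⟨v₁ + 1, hstart.1, hstart.2.1⟩ ⟨v₂ + 1, hend.2.1, hend.1⟩
  have hend_in_arc := hreach.of_adj_closed (P := fun x => CyclicBtw v₁ v₂ x.1)
    (fun x y hxy => harc_closed x y hxy y.2.1 y.2.2) hstart
  exact hend.not_swap hend_in_arc

/-- Necessity of the 3-connectivity criterion: if a pair of vertices of `Γ` is joined
both by a top edge and by a bottom edge, then removing these two vertices disconnects
the graph, so `Γ` is not 3-connected. -/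
theorem not_three_connected_of_double_chord (N : ℕ) [NeZero N] (hN : 4 ≤ N)
    (G : SimpleGraph (Fin N)) (top bot : Fin N → Fin N → Prop)
    (htop : IsChordRel top) (hbot : IsChordRel bot)
    (hadj : ∀ u v, G.Adj u v ↔ (v = u + 1 ∨ u = v + 1 ∨ top u v ∨ bot u v))
    (v₁ v₂ : Fin N) (h1 : top v₁ v₂) (h2 : bot v₁ v₂) :
    ¬ (G.induce {x : Fin N | x ≠ v₁ ∧ x ≠ v₂}).Connected :=
  not_three_connected_of_double_chord_general N G top bot htop hbot hadj v₁ v₂ h1 h2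
end

section
/- Sufficiency of the 3-connectivity criterion for triangulations: let Γ be a triangulation of the 2-sphere with N ≥ 4 vertices all on a Hamiltonian cycle γ whose edges belong to Γ. If no pair of vertices is joined by both a top edge and a bottom edge of Γ, then Γ is 3-connected. -/
/-- A maximal noncrossing chord family in one region: every further chord would cross
one of its members.  This encodes that the region is triangulated. -/
def IsTriangulatingChordRel {N : ℕ} [NeZero N] (R : Fin N → Fin N → Prop) : Prop :=
  IsChordRel R ∧
  ∀ a b : Fin N, (a ≠ b ∧ b ≠ a + 1 ∧ a ≠ b + 1) → ¬ R a b →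
    ∃ c d, R c d ∧ ChordCross a b c d

/-!
Deleting two vertices `u ≠ w` leaves the two open arcs of the Hamiltonian cycle between them,
each connected through cycle edges. If `u` and `w` are neighbours on the cycle one arc is empty.
Otherwise `{u, w}` is not a chord of both disks, so maximality of the chord family of the other
disk yields a chord crossing `{u, w}`; its endpoints lie on different arcs and join them.
-/

open Fin.NatCast

namespace Fin

variable {N : ℕ} [NeZero N]

theorem val_sub_eq_iff {a x : Fin N} {i : ℕ} (hi : i < N) : (x - a).val = i ↔ x = a + i := by
  constructor
  · rintro rfl
    rw [cast_val_eq_self, add_sub_cancel]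
  · rintro rfl
    rw [add_sub_cancel_left, val_cast_of_lt hi]

theorem val_sub_ne_zero_iff {a x : Fin N} : (x - a).val ≠ 0 ↔ x ≠ a := by
  rw [Ne, val_eq_zero_iff, sub_eq_zero]

theorem val_sub_add_val_sub {a b : Fin N} (h : a ≠ b) : (b - a).val + (a - b).val = N := by
  have hpos : (0 : Fin N) < b - a := by
    rw [pos_iff_ne_zero, Ne, sub_eq_zero]
    exact h.symm
  have := coe_sub_iff_lt.2 hpos
  rw [zero_sub_sub, val_zero] at this
  omega

theorem two_le_val_sub {a b : Fin N} (hab : a ≠ b) (hb : b ≠ a + 1) : 2 ≤ (b - a).val := by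
  have h0 := val_sub_ne_zero_iff.2 hab.symm
  have h1 : (b - a).val ≠ 1 := fun h => hb <| by
    rw [(val_sub_eq_iff (h ▸ (b - a).is_lt)).1 h, Nat.cast_one]
  omega

theorem two_le_val_sub_add_one (hN : 3 ≤ N) (a : Fin N) : 2 ≤ (a - (a + 1)).val := by
  have h1 : (a + 1 - a).val = 1 := (val_sub_eq_iff (by omega)).2 (by rw [Nat.cast_one])
  have hne : a ≠ a + 1 := fun h => by
    rw [← h, sub_self, val_zero] at h1
    omega
  have := val_sub_add_val_sub hne
  omega

end Fin

section CyclicArcs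

variable {N : ℕ} [NeZero N]

theorem cyclicBtw_iff {a b x : Fin N} :
    CyclicBtw a b x ↔ (x - a).val ∈ Set.Icc 1 ((b - a).val - 1) := by
  rw [CyclicBtw, Set.mem_Icc, ← Fin.val_sub_ne_zero_iff]
  constructor
  · rintro ⟨hxa, -, hlt⟩
    omega
  · rintro ⟨h1, h2⟩
    refine ⟨by omega, ?_, by omega⟩
    rintro rfl
    omega

theorem cyclicBtw_or_cyclicBtw {u w x : Fin N} (huw : u ≠ w) (hxu : x ≠ u) (hxw : x ≠ w) :
    CyclicBtw u w x ∨ CyclicBtw w u x := by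
  rcases lt_trichotomy (x - u).val (w - u).val with hlt | heq | hgt
  · exact Or.inl ⟨hxu, hxw, hlt⟩
  · exact absurd (sub_left_inj.1 (Fin.ext heq)) hxw
  · have hxw' : (x - w).val = (x - u).val - (w - u).val := by
      rw [← sub_sub_sub_cancel_right x w u]
      exact Fin.coe_sub_iff_le.2 hgt.le
    have := Fin.val_sub_add_val_sub huw
    have := (x - u).is_lt
    exact Or.inr ⟨hxw, hxu, by omega⟩

theorem setOf_ne_and_ne_eq_union {u w : Fin N} (huw : u ≠ w) :
    {x | x ≠ u ∧ x ≠ w} = {x | CyclicBtw u w x} ∪ {x | CyclicBtw w u x} := by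
  ext x
  constructor
  · rintro ⟨hxu, hxw⟩
    exact cyclicBtw_or_cyclicBtw huw hxu hxw
  · rintro (⟨hxu, hxw, -⟩ | ⟨hxw, hxu, -⟩) <;> exact ⟨hxu, hxw⟩

theorem setOf_cyclicBtw_add_one (a : Fin N) : {x | CyclicBtw a (a + 1) x} = ∅ := by
  refine Set.eq_empty_of_forall_notMem fun x ⟨hxa, _, hlt⟩ => ?_
  rw [add_sub_cancel_left, Fin.val_one'] at hlt
  have := Fin.val_sub_ne_zero_iff.2 hxa
  have := Nat.mod_le 1 N
  omega

end CyclicArcs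

namespace SimpleGraph

variable {N : ℕ} [NeZero N] {G : SimpleGraph (Fin N)}

theorem connected_induce_arc (hcyc : ∀ x, G.Adj x (x + 1)) (a : Fin N) {s t : ℕ} (hst : s ≤ t)
    (ht : t < N) : (G.induce {x | (x - a).val ∈ Set.Icc s t}).Connected := by
  induction t, hst using Nat.le_induction with
  | base =>
    have hS : {x | (x - a).val ∈ Set.Icc s s} = {a + (s : Fin N)} := by
      ext x
      rw [Set.Icc_self, Set.mem_ofPred_eq, Set.mem_singleton_iff, Set.mem_singleton_iff,
        Fin.val_sub_eq_iff ht]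
    rw [hS, induce_singleton_eq_top]
    exact connected_top
  | succ t hst ih =>
    have hS : {x | (x - a).val ∈ Set.Icc s (t + 1)} =
        {x | (x - a).val ∈ Set.Icc s t} ∪ {a + (t : Fin N), a + ((t + 1 : ℕ) : Fin N)} := by
      ext x
      simp only [Set.mem_ofPred_eq, Set.mem_union, Set.mem_insert_iff, Set.mem_singleton_iff,
        Set.mem_Icc, ← Fin.val_sub_eq_iff (show t < N by omega), ← Fin.val_sub_eq_iff ht]
      omega
    have hadj : G.Adj (a + (t : Fin N)) (a + ((t + 1 : ℕ) : Fin N)) := by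
      rw [Nat.cast_succ, ← add_assoc]
      exact hcyc _
    rw [hS]
    refine induce_union_connected (ih (by omega)).preconnected
      (induce_pair_connected_of_adj hadj).preconnected ⟨a + (t : Fin N), ?_, Set.mem_insert _ _⟩
    rw [Set.mem_ofPred_eq, Fin.val_sub_eq_iff (by omega) |>.2 rfl]
    exact ⟨hst, le_rfl⟩

theorem connected_induce_cyclicBtw (hcyc : ∀ x, G.Adj x (x + 1)) {a b : Fin N}
    (h : 2 ≤ (b - a).val) : (G.induce {x | CyclicBtw a b x}).Connected := by
  rw [show {x | CyclicBtw a b x} = _ from Set.ext fun _ => cyclicBtw_iff]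
  exact connected_induce_arc hcyc a (by omega) (by omega)

end SimpleGraph

open SimpleGraph

theorem exists_chordCross_of_isTriangulatingChordRel {N : ℕ} [NeZero N]
    {top bot : Fin N → Fin N → Prop}
    (htop : IsTriangulatingChordRel top) (hbot : IsTriangulatingChordRel bot)
    (hno : ∀ a b, ¬ (top a b ∧ bot a b)) {a b : Fin N} (hab : a ≠ b ∧ b ≠ a + 1 ∧ a ≠ b + 1) :
    ∃ c d, (top c d ∨ bot c d) ∧ ChordCross a b c d := by
  by_cases hta : top a b
  · obtain ⟨c, d, hcd, hcross⟩ := hbot.2 a b hab fun hba => hno a b ⟨hta, hba⟩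
    exact ⟨c, d, Or.inr hcd, hcross⟩
  · obtain ⟨c, d, hcd, hcross⟩ := htop.2 a b hab hta
    exact ⟨c, d, Or.inl hcd, hcross⟩

/-- Sufficiency of the 3-connectivity criterion for triangulations: if the top and
bottom chords triangulate the two disks and no pair of vertices is joined both by a
top edge and a bottom edge, then removing any two vertices leaves the graph
connected, i.e. `Γ` is 3-connected. -/
theorem three_connected_of_no_double_chord (N : ℕ) [NeZero N] (hN : 4 ≤ N)
    (G : SimpleGraph (Fin N)) (top bot : Fin N → Fin N → Prop)
    (htop : IsTriangulatingChordRel top) (hbot : IsTriangulatingChordRel bot)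
    (hadj : ∀ u v, G.Adj u v ↔ (v = u + 1 ∨ u = v + 1 ∨ top u v ∨ bot u v))
    (hno : ∀ a b, ¬ (top a b ∧ bot a b)) :
    ∀ u w : Fin N, (G.induce {x : Fin N | x ≠ u ∧ x ≠ w}).Connected := by
  have hcyc : ∀ x, G.Adj x (x + 1) := fun x => (hadj x (x + 1)).2 (Or.inl rfl)
  intro u w
  rcases eq_or_ne u w with rfl | huw
  · have hS : {x | x ≠ u ∧ x ≠ u} = {x | (x - u).val ∈ Set.Icc 1 (N - 1)} := by
      ext x
      simp only [and_self, Set.mem_ofPred_eq, Set.mem_Icc, ← Fin.val_sub_ne_zero_iff]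
      omega
    rw [hS]
    exact connected_induce_arc hcyc u (by omega) (by omega)
  rw [setOf_ne_and_ne_eq_union huw]
  by_cases hwu : w = u + 1
  · rw [hwu, setOf_cyclicBtw_add_one, Set.empty_union]
    exact connected_induce_cyclicBtw hcyc (Fin.two_le_val_sub_add_one (by omega) _)
  by_cases huw' : u = w + 1
  · rw [huw', setOf_cyclicBtw_add_one, Set.union_empty]
    exact connected_induce_cyclicBtw hcyc (Fin.two_le_val_sub_add_one (by omega) _)
  obtain ⟨c, d, hcd, hc, hd⟩ :=
    exists_chordCross_of_isTriangulatingChordRel htop hbot hno ⟨huw, hwu, huw'⟩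
  exact connected_induce_union
    (connected_induce_cyclicBtw hcyc (Fin.two_le_val_sub huw hwu)).preconnected
    (connected_induce_cyclicBtw hcyc (Fin.two_le_val_sub huw.symm huw')).preconnected hc hd
    ((hadj c d).2 (Or.inr (Or.inr hcd)))
end

section
/- The flip graph of triangulations of a convex polygon with N ≥ 4 vertices is connected: any two triangulations of a convex N-gon (triangulations by diagonals with no interior vertices) can be joined by a finite sequence of diagonal flips, where a flip replaces one diagonal of a triangulation by the opposite diagonal of the quadrilateral formed by the two triangles adjacent to it. -/
/-- `p = (i, j)` is a diagonal of the convex polygon with vertices `0, 1, …, N-1`: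
`i < j < N` and the vertices `i`, `j` are not adjacent on the boundary. -/
def IsDiag (N : ℕ) (p : ℕ × ℕ) : Prop :=
  p.1 < p.2 ∧ p.2 < N ∧ p.2 ≠ p.1 + 1 ∧ ¬(p.1 = 0 ∧ p.2 = N - 1)

/-- Two diagonals of a convex polygon cross in their interiors. -/
def DiagCross (p q : ℕ × ℕ) : Prop :=
  (p.1 < q.1 ∧ q.1 < p.2 ∧ p.2 < q.2) ∨ (q.1 < p.1 ∧ p.1 < q.2 ∧ q.2 < p.2)

/-- A triangulation of a convex `N`-gon: a maximal set of pairwise noncrossing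
diagonals. -/
def IsPolygonTriangulation (N : ℕ) (D : Finset (ℕ × ℕ)) : Prop :=
  (∀ p ∈ D, IsDiag N p) ∧
  (∀ p ∈ D, ∀ q ∈ D, ¬ DiagCross p q) ∧
  (∀ p, IsDiag N p → p ∉ D → ∃ q ∈ D, DiagCross p q)

/-- Two triangulations are related by a flip when they differ in exactly one
diagonal. -/
def FlipAdj (N : ℕ) (D D' : Finset (ℕ × ℕ)) : Prop :=
  IsPolygonTriangulation N D ∧ IsPolygonTriangulation N D' ∧
  (D \ D').card = 1 ∧ (D' \ D).card = 1

/-- The key step: if a triangulation contains a diagonal not incident to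
vertex `0`, we can flip the longest such diagonal to a diagonal incident to
`0`, strictly decreasing the number of diagonals not incident to `0`. -/
lemma flip_step (N : ℕ) (D : Finset (ℕ × ℕ)) (hD : IsPolygonTriangulation N D)
    (hne : ∃ p ∈ D, p.1 ≠ 0) :
    ∃ D', FlipAdj N D D' ∧
      (D'.filter (fun p => p.1 ≠ 0)).card < (D.filter (fun p => p.1 ≠ 0)).card := by
  classical
  obtain ⟨hd1, hd2, hd3⟩ := hD
  -- choose the longest diagonal not incident to 0
  have hSne : (D.filter (fun p => p.1 ≠ 0)).Nonempty := by
    obtain ⟨p, hp, hp0⟩ := hne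
    exact ⟨p, Finset.mem_filter.2 ⟨hp, hp0⟩⟩
  obtain ⟨e, heS, hemax⟩ := (D.filter (fun p => p.1 ≠ 0)).exists_max_image
    (fun p => p.2 - p.1) hSne
  obtain ⟨u, v⟩ := e
  rw [Finset.mem_filter] at heS
  obtain ⟨heD, hu0⟩ := heS
  have hu1 : 1 ≤ u := Nat.one_le_iff_ne_zero.2 hu0
  have hediag := hd1 _ heD
  obtain ⟨huv, hvN, hvadj, -⟩ := hediag
  have huv2 : u + 2 ≤ v := by simp at hvadj; omega
  -- maximality of the length of e among diagonals not incident to 0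
  have maxlen : ∀ c d, (c, d) ∈ D → 1 ≤ c → d - c ≤ v - u := by
    intro c d hcd hc
    have := hemax (c, d) (Finset.mem_filter.2 ⟨hcd, by simp; omega⟩)
    simpa using this
  -- any diagonal of D with an endpoint strictly inside (u,v) is nested in [u,v]
  have star : ∀ c d, (c, d) ∈ D → ((u < c ∧ c < v) ∨ (u < d ∧ d < v)) →
      u ≤ c ∧ d ≤ v := by
    intro c d hcd hin
    have hnc := hd2 _ hcd _ heD
    have hcd' := hd1 _ hcd
    simp only [DiagCross, IsDiag] at hnc hcd'
    omega
  -- the vertex 0 is joined to u in D (or u = 1)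
  have side0u : u = 1 ∨ (0, u) ∈ D := by
    by_cases h1 : u = 1
    · exact Or.inl h1
    · right
      by_contra h0u
      have hdiag : IsDiag N (0, u) := by simp [IsDiag]; omega
      obtain ⟨⟨g, h⟩, hq, hcr⟩ := hd3 _ hdiag h0u
      simp only [DiagCross] at hcr
      have hq' := hd1 _ hq
      simp only [IsDiag] at hq'
      -- g,h cross (0,u): 0 < g < u < h
      have hg : 0 < g ∧ g < u ∧ u < h := by omega
      have hst := star g h hq
      have hnc := hd2 _ hq _ heD
      simp only [DiagCross] at hnc
      have hml := maxlen g h hq (by omega)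
      omega
  -- the vertex 0 is joined to v in D (or v = N-1)
  have side0v : v = N - 1 ∨ (0, v) ∈ D := by
    by_cases h1 : v = N - 1
    · exact Or.inl h1
    · right
      by_contra h0v
      have hdiag : IsDiag N (0, v) := by simp [IsDiag]; omega
      obtain ⟨⟨g, h⟩, hq, hcr⟩ := hd3 _ hdiag h0v
      simp only [DiagCross] at hcr
      have hq' := hd1 _ hq
      simp only [IsDiag] at hq'
      have hg : 0 < g ∧ g < v ∧ v < h := by omega
      have hst := star g h hq
      have hnc := hd2 _ hq _ heD
      simp only [DiagCross] at hnc
      have hml := maxlen g h hq (by omega)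
      omega
  -- find the apex w of the triangle on the far side of e
  have hW : ∃ w, u < w ∧ w < v ∧ ((w, v) ∈ D ∨ w + 1 = v) ∧
      (((u, w) ∈ D ∧ ∀ t, (u, t) ∈ D → t < v → t ≤ w) ∨
       (w = u + 1 ∧ ∀ t, u < t → t < v → (u, t) ∉ D)) := by
    by_cases hA : ∃ t, u < t ∧ t < v ∧ (u, t) ∈ D
    · -- take the largest such t
      set T := (D.filter (fun p => p.1 = u ∧ u < p.2 ∧ p.2 < v)).image Prod.snd with hT
      have hTne : T.Nonempty := by
        obtain ⟨t, ht1, ht2, ht3⟩ := hA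
        exact ⟨t, Finset.mem_image.2 ⟨(u, t), Finset.mem_filter.2 ⟨ht3, by simp; omega⟩, rfl⟩⟩
      set w := T.max' hTne with hw
      have hwT : w ∈ T := T.max'_mem hTne
      rw [hT, Finset.mem_image] at hwT
      obtain ⟨⟨a, b⟩, hab, hab2⟩ := hwT
      rw [Finset.mem_filter] at hab
      obtain ⟨habD, ha, hb1, hb2⟩ := hab
      dsimp only at ha hb1 hb2 hab2
      rw [ha, hab2] at habD
      rw [hab2] at hb1 hb2
      have hwmax : ∀ t, (u, t) ∈ D → t < v → t ≤ w := by
        intro t htD htv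
        by_cases htu : u < t
        · exact T.le_max' t (Finset.mem_image.2
            ⟨(u, t), Finset.mem_filter.2 ⟨htD, by simp; omega⟩, rfl⟩)
        · omega
      refine ⟨w, hb1, hb2, ?_, Or.inl ⟨habD, hwmax⟩⟩
      -- show (w, v) ∈ D or w + 1 = v
      by_cases hwv : w + 1 = v
      · exact Or.inr hwv
      · left
        by_contra hwvD
        have hdiag : IsDiag N (w, v) := by simp [IsDiag]; omega
        obtain ⟨⟨g, h⟩, hq, hcr⟩ := hd3 _ hdiag hwvD
        simp only [DiagCross] at hcr
        rcases hcr with ⟨h1, h2, h3⟩ | ⟨h1, h2, h3⟩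
        · -- w < g < v < h : g strictly inside (u,v), so h ≤ v, contradiction
          have := star g h hq (by omega)
          omega
        · -- g < w < h < v : h strictly inside (u,v), so g ≥ u
          have hst := star g h hq (by omega)
          have hgu : u ≤ g := hst.1
          rcases Nat.eq_or_lt_of_le hgu with hgu' | hgu'
          · -- g = u : (u,h) ∈ D with h > w contradicts maximality
            subst hgu'
            have := hwmax h hq (by omega)
            omega
          · -- u < g < w < h : crosses (u,w) ∈ D
            have hnc := hd2 _ habD _ hq
            simp only [DiagCross] at hnc
            omega
    · -- no diagonal from u strictly inside: the apex is u+1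
      push_neg at hA
      refine ⟨u + 1, by omega, by omega, ?_, Or.inr ⟨rfl, hA⟩⟩
      by_cases hwv : u + 2 = v
      · exact Or.inr (by omega)
      · left
        by_contra hwvD
        have hdiag : IsDiag N (u + 1, v) := by simp [IsDiag]; omega
        obtain ⟨⟨g, h⟩, hq, hcr⟩ := hd3 _ hdiag hwvD
        simp only [DiagCross] at hcr
        rcases hcr with ⟨h1, h2, h3⟩ | ⟨h1, h2, h3⟩
        · have := star g h hq (by omega)
          omega
        · have hst := star g h hq (by omega)
          have : g = u := by omega
          subst this
          exact hA h (by omega) (by omega) hq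
  obtain ⟨w, huw, hwv, hwvside, hspec⟩ := hW
  -- the new diagonal
  set f : ℕ × ℕ := (0, w) with hf
  have hfdiag : IsDiag N f := by simp [IsDiag, hf]; omega
  have hef : (u, v) ≠ f := by simp [hf]; omega
  -- f crosses e
  have hcref : DiagCross (u, v) f := by
    simp only [DiagCross, hf]
    omega
  have hfD : f ∉ D := fun hfD' => hd2 _ heD _ hfD' hcref
  -- f does not cross any diagonal of D other than e
  have hfnc : ∀ q ∈ D, q ≠ (u, v) → ¬ DiagCross f q := by
    rintro ⟨c, d⟩ hq hqe hcr
    simp only [DiagCross, hf] at hcr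
    have hcd : c < d ∧ 0 < c ∧ c < w ∧ w < d := by
      have := (hd1 _ hq).1
      omega
    obtain ⟨hcd1, hc0, hcw, hwd⟩ := hcd
    have hnc := hd2 _ hq _ heD
    simp only [DiagCross] at hnc
    rcases lt_trichotomy c u with hcu | hcu | hcu
    · -- c < u : q must jump over e entirely, contradicting maximality of length
      have hdv : v ≤ d := by omega
      have := maxlen c d hq (by omega)
      omega
    · -- c = u : q = (u,d) with d > w
      subst hcu
      rcases hspec with ⟨hmemw, hmaxw⟩ | ⟨hwu1, hnone⟩
      · rcases lt_trichotomy d v with hdv | hdv | hdv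
        · have := hmaxw d hq hdv; omega
        · exact hqe (by simp [hdv])
        · have := maxlen c d hq (by omega); omega
      · rcases lt_trichotomy d v with hdv | hdv | hdv
        · exact hnone d (by omega) hdv hq
        · exact hqe (by simp [hdv])
        · have := maxlen c d hq (by omega); omega
    · -- u < c < w : q crosses (u,w) ∈ D
      rcases hspec with ⟨hmemw, hmaxw⟩ | ⟨hwu1, hnone⟩
      · have hnc2 := hd2 _ hq _ hmemw
        simp only [DiagCross] at hnc2
        omega
      · omega
  -- the flipped triangulation
  set D' : Finset (ℕ × ℕ) := insert f (D.erase (u, v)) with hD'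
  have heD' : (u, v) ∉ D' := by
    simp only [hD', Finset.mem_insert, Finset.mem_erase]
    push_neg
    exact ⟨hef, fun h => absurd rfl h⟩
  have hDsub : ∀ q ∈ D, q ≠ (u, v) → q ∈ D' := by
    intro q hq hqe
    simp [hD', Finset.mem_insert, Finset.mem_erase, hqe, hq]
  have hfD' : f ∈ D' := by simp [hD']
  -- D' is a triangulation
  have hD'tri : IsPolygonTriangulation N D' := by
    refine ⟨?_, ?_, ?_⟩
    · intro p hp
      rcases Finset.mem_insert.1 hp with rfl | hp
      · exact hfdiag
      · exact hd1 _ (Finset.mem_of_mem_erase hp)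
    · intro p hp q hq
      rcases Finset.mem_insert.1 hp with rfl | hp <;>
        rcases Finset.mem_insert.1 hq with rfl | hq
      · simp [DiagCross, hf]
      · exact hfnc _ (Finset.mem_of_mem_erase hq) (Finset.ne_of_mem_erase hq)
      · intro hc
        refine hfnc _ (Finset.mem_of_mem_erase hp) (Finset.ne_of_mem_erase hp) ?_
        simp only [DiagCross] at hc ⊢
        omega
      · exact hd2 _ (Finset.mem_of_mem_erase hp) _ (Finset.mem_of_mem_erase hq)
    · rintro ⟨c, d⟩ hpdiag hpD'
      by_cases hpe : (c, d) = (u, v)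
      · rw [hpe]
        exact ⟨f, hfD', hcref⟩
      · have hpD : (c, d) ∉ D := fun h => hpD' (hDsub _ h hpe)
        obtain ⟨q, hq, hcr⟩ := hd3 _ hpdiag hpD
        by_cases hqe : q = (u, v)
        · -- q = e : (c,d) crosses e, find a crossing diagonal in D'
          subst hqe
          simp only [DiagCross] at hcr
          have hcd1 : c < d := hpdiag.1
          have hdN : d < N := hpdiag.2.1
          rcases hcr with ⟨h1, h2, h3⟩ | ⟨h1, h2, h3⟩
          · -- c < u < d < v
            rcases lt_trichotomy d w with hdw | hdw | hdw
            · -- d < w : crosses (u,w)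
              rcases hspec with ⟨hmemw, hmaxw⟩ | ⟨hwu1, hnone⟩
              · refine ⟨(u, w), hDsub _ hmemw (by simp; omega), ?_⟩
                simp only [DiagCross]; omega
              · omega
            · -- d = w : crosses (0,u)
              rcases side0u with hu1 | h0u
              · -- then c = 0 and p = f, contradiction
                exfalso
                have : c = 0 := by omega
                subst this; subst hdw
                exact hpD' hfD'
              · rcases Nat.eq_zero_or_pos c with hc0 | hc0
                · exfalso
                  subst hc0; subst hdw
                  exact hpD' hfD'
                · refine ⟨(0, u), hDsub _ h0u (by simp; omega), ?_⟩
                  simp only [DiagCross]; omega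
            · -- d > w : crosses (w,v)
              rcases hwvside with hmemwv | hwv1
              · refine ⟨(w, v), hDsub _ hmemwv (by simp; omega), ?_⟩
                simp only [DiagCross]; omega
              · omega
          · -- u < c < v < d
            rcases lt_trichotomy c w with hcw | hcw | hcw
            · rcases hspec with ⟨hmemw, hmaxw⟩ | ⟨hwu1, hnone⟩
              · refine ⟨(u, w), hDsub _ hmemw (by simp; omega), ?_⟩
                simp only [DiagCross]; omega
              · omega
            · -- c = w : crosses (0,v)
              rcases side0v with hv1 | h0v
              · omega
              · refine ⟨(0, v), hDsub _ h0v (by simp; omega), ?_⟩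
                simp only [DiagCross]; omega
            · rcases hwvside with hmemwv | hwv1
              · refine ⟨(w, v), hDsub _ hmemwv (by simp; omega), ?_⟩
                simp only [DiagCross]; omega
              · omega
        · exact ⟨q, hDsub _ hq hqe, hcr⟩
  -- the set differences
  have hsd1 : D \ D' = {(u, v)} := by
    ext x
    simp only [Finset.mem_sdiff, hD', Finset.mem_insert, Finset.mem_erase,
      Finset.mem_singleton]
    constructor
    · rintro ⟨hx, hx2⟩
      push_neg at hx2
      by_contra hxe
      exact (hx2.2 hxe) hx
    · rintro rfl
      refine ⟨heD, ?_⟩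
      push_neg
      exact ⟨hef, fun h => absurd rfl h⟩
  have hsd2 : D' \ D = {f} := by
    ext x
    simp only [Finset.mem_sdiff, hD', Finset.mem_insert, Finset.mem_erase,
      Finset.mem_singleton]
    constructor
    · rintro ⟨hx, hx2⟩
      rcases hx with rfl | ⟨-, hx⟩
      · rfl
      · exact absurd hx hx2
    · rintro rfl
      exact ⟨Or.inl rfl, hfD⟩
  refine ⟨D', ⟨⟨hd1, hd2, hd3⟩, hD'tri, by rw [hsd1]; simp, by rw [hsd2]; simp⟩, ?_⟩
  -- the measure decreases
  have hfilter : D'.filter (fun p => p.1 ≠ 0) =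
      (D.filter (fun p => p.1 ≠ 0)).erase (u, v) := by
    rw [hD', Finset.filter_insert]
    simp only [hf, ne_eq, not_true_eq_false, if_false, not_not]
    rw [Finset.filter_erase]
  rw [hfilter]
  have hmem : (u, v) ∈ D.filter (fun p => p.1 ≠ 0) :=
    Finset.mem_filter.2 ⟨heD, by simpa using hu0⟩
  rw [Finset.card_erase_of_mem hmem]
  have := Finset.card_pos.2 ⟨_, hmem⟩
  omega

/-- Triangulations in which all diagonals contain vertex `0` are unique. -/
lemma fan_unique (N : ℕ) (Z₁ Z₂ : Finset (ℕ × ℕ))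
    (h₁ : IsPolygonTriangulation N Z₁) (h₂ : IsPolygonTriangulation N Z₂)
    (hz₁ : ∀ p ∈ Z₁, p.1 = 0) (hz₂ : ∀ p ∈ Z₂, p.1 = 0) : Z₁ = Z₂ := by
  have key : ∀ (A B : Finset (ℕ × ℕ)), IsPolygonTriangulation N A →
      IsPolygonTriangulation N B → (∀ p ∈ A, p.1 = 0) → (∀ p ∈ B, p.1 = 0) →
      ∀ p ∈ A, p ∈ B := by
    intro A B hA hB hzA hzB p hp
    by_contra hpB
    obtain ⟨q, hq, hcr⟩ := hB.2.2 p (hA.1 p hp) hpB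
    have h1 := hzA p hp
    have h2 := hzB q hq
    simp only [DiagCross] at hcr
    omega
  ext p
  exact ⟨fun h => key Z₁ Z₂ h₁ h₂ hz₁ hz₂ p h, fun h => key Z₂ Z₁ h₂ h₁ hz₂ hz₁ p h⟩

/-- Every triangulation can be flipped to one all of whose diagonals contain 0. -/
lemma to_fan (N : ℕ) : ∀ n (D : Finset (ℕ × ℕ)), IsPolygonTriangulation N D →
    (D.filter (fun p => p.1 ≠ 0)).card ≤ n →
    ∃ D₀, IsPolygonTriangulation N D₀ ∧ (∀ p ∈ D₀, p.1 = 0) ∧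
      Relation.ReflTransGen (FlipAdj N) D D₀ := by
  intro n
  induction n with
  | zero =>
    intro D hD hcard
    refine ⟨D, hD, ?_, Relation.ReflTransGen.refl⟩
    intro p hp
    by_contra hp0
    have : p ∈ D.filter (fun p => p.1 ≠ 0) := Finset.mem_filter.2 ⟨hp, hp0⟩
    have := Finset.card_pos.2 ⟨_, this⟩
    omega
  | succ n ih =>
    intro D hD hcard
    by_cases hz : ∀ p ∈ D, p.1 = 0
    · exact ⟨D, hD, hz, Relation.ReflTransGen.refl⟩
    · push_neg at hz
      obtain ⟨D', hflip, hlt⟩ := flip_step N D hD hz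
      obtain ⟨D₀, h₀, hz₀, hpath⟩ := ih D' hflip.2.1 (by omega)
      exact ⟨D₀, h₀, hz₀, Relation.ReflTransGen.head hflip hpath⟩

/-- The flip graph of triangulations of a convex polygon with `N ≥ 4` vertices is
connected: any two triangulations are joined by a finite sequence of diagonal
flips. -/
theorem flip_graph_connected (N : ℕ) (hN : 4 ≤ N) (D₁ D₂ : Finset (ℕ × ℕ))
    (h₁ : IsPolygonTriangulation N D₁) (h₂ : IsPolygonTriangulation N D₂) :
    Relation.ReflTransGen (FlipAdj N) D₁ D₂ := by
  classical
  obtain ⟨Z₁, hZ₁, hz₁, hp₁⟩ := to_fan N _ D₁ h₁ le_rfl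
  obtain ⟨Z₂, hZ₂, hz₂, hp₂⟩ := to_fan N _ D₂ h₂ le_rfl
  have hZeq : Z₁ = Z₂ := fan_unique N Z₁ Z₂ hZ₁ hZ₂ hz₁ hz₂
  have hsymm : Symmetric (FlipAdj N) := by
    rintro A B ⟨hA, hB, c1, c2⟩
    exact ⟨hB, hA, c2, c1⟩
  refine hp₁.trans ?_
  rw [hZeq]
  haveI : Std.Symm (FlipAdj N) := ⟨fun a b h => hsymm h⟩
  exact (Relation.ReflTransGen.symmetric (r := FlipAdj N)).symm _ _ hp₂
end

section
/- Any fan triangulation of a convex polygon can be reached by flips: for a convex polygon with N ≥ 4 vertices, every triangulation can be transformed by finitely many diagonal flips into the fan triangulation at a fixed vertex v₀ (the triangulation whose diagonals all emanate from v₀), and the number of diagonals of any triangulation is N − 3. -/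
/-- The fan triangulation at the vertex `0`: all diagonals from `0`. -/
def FanTriangulation (N : ℕ) : Finset (ℕ × ℕ) :=
  (Finset.Ico 2 (N - 1)).image fun j => (0, j)

/-!
Measure the distance to the fan by the number of diagonals not incident to `0`. If some diagonal
misses `0`, take consecutive neighbours `u < w` of `0` with `u + 1 < w`: then `0 u w` is a
triangle, so `(u, w)` is a diagonal, and the triangle `u x w` on its other side gives the
quadrilateral `0 u x w`, in which flipping `(u, w)` to `(0, x)` removes a diagonal not incident
to `0`. Flips preserve the number of diagonals, and the fan has `N - 3` of them.
-/

open Finset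

theorem Nat.exists_consecutive_around {P : ℕ → Prop} {a j b : ℕ} (ha : P a) (hb : P b)
    (haj : a < j) (hjb : j < b) (hj : ¬ P j) :
    ∃ u w, a ≤ u ∧ u < j ∧ j < w ∧ w ≤ b ∧ P u ∧ P w ∧
      ∀ i, u < i → i < w → ¬ P i := by
  classical
  have hex : ∃ w, j < w ∧ P w := ⟨b, hjb, hb⟩
  have hau : a ≤ Nat.findGreatest P j := Nat.le_findGreatest haj.le ha
  have hPu : P (Nat.findGreatest P j) := Nat.findGreatest_spec haj.le ha
  have huj : Nat.findGreatest P j < j :=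
    (Nat.findGreatest_le j).lt_of_ne fun h => hj (h ▸ hPu)
  refine ⟨_, Nat.find hex, hau, huj, (Nat.find_spec hex).1, Nat.find_min' hex ⟨hjb, hb⟩, hPu,
    (Nat.find_spec hex).2, fun i hui hiw hPi => ?_⟩
  rcases le_or_gt i j with hij | hji
  · exact Nat.findGreatest_is_greatest hui hij hPi
  · exact Nat.find_min hex hiw ⟨hji, hPi⟩

theorem diagCross_comm {p q : ℕ × ℕ} : DiagCross p q ↔ DiagCross q p := by
  unfold DiagCross; omega

theorem not_diagCross_self (p : ℕ × ℕ) : ¬ DiagCross p p := by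
  unfold DiagCross; omega

/-- A side of the polygon, or a diagonal of `D`. -/
def IsChord (N : ℕ) (D : Finset (ℕ × ℕ)) (p : ℕ × ℕ) : Prop :=
  p.2 = p.1 + 1 ∨ (p.1 = 0 ∧ p.2 = N - 1) ∨ p ∈ D

namespace IsChord

variable {N : ℕ} {D D' : Finset (ℕ × ℕ)} {p q : ℕ × ℕ}

theorem subset (hp : IsChord N D p) (h : p ∈ D → p ∈ D') : IsChord N D' p :=
  hp.imp_right (Or.imp_right h)

theorem mem_of_diagCross (hp : IsChord N D p) (hpq : DiagCross p q) (hq : q.2 < N) : p ∈ D := by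
  rcases hp with hp | hp | hp
  · unfold DiagCross at hpq; omega
  · unfold DiagCross at hpq; omega
  · exact hp

theorem not_diagCross (hD : IsPolygonTriangulation N D) (hp : IsChord N D p) (hq : q ∈ D) :
    ¬ DiagCross p q := fun hpq =>
  hD.2.1 p (hp.mem_of_diagCross hpq (hD.1 q hq).2.1) q hq hpq

theorem of_forall_not_diagCross (hD : IsPolygonTriangulation N D) (hp : p.1 < p.2)
    (hpN : p.2 < N) (h : ∀ q ∈ D, ¬ DiagCross p q) : IsChord N D p := by
  by_contra hne
  simp only [IsChord, not_or] at hne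
  obtain ⟨q, hq, hpq⟩ := hD.2.2 p ⟨hp, hpN, hne.1, hne.2.1⟩ hne.2.2
  exact h q hq hpq

/-- The apex is the largest `x < b` with `(a, x)` a chord. -/
theorem exists_apex (hD : IsPolygonTriangulation N D) {a b : ℕ} (hab : IsChord N D (a, b))
    (h1 : a + 1 < b) (hb : b < N) :
    ∃ x, a < x ∧ x < b ∧ IsChord N D (a, x) ∧ IsChord N D (x, b) := by
  classical
  set P : ℕ → Prop := fun x => a < x ∧ IsChord N D (a, x)
  obtain ⟨hax, hPx⟩ : P (Nat.findGreatest P (b - 1)) :=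
    Nat.findGreatest_spec (m := a + 1) (by omega) ⟨by omega, Or.inl rfl⟩
  set x := Nat.findGreatest P (b - 1)
  have hxb : x ≤ b - 1 := Nat.findGreatest_le _
  refine ⟨x, hax, by omega, hPx, of_forall_not_diagCross hD (by omega) (by omega) ?_⟩
  rintro ⟨c, d⟩ hq hcross
  have hcd := hD.1 _ hq
  unfold IsDiag at hcd
  rcases lt_trichotomy c a with hca | rfl | hac
  · exact hab.not_diagCross hD hq (by unfold DiagCross at *; omega)
  · have hdb : d < b := by
      by_contra
      exact hab.not_diagCross hD hq (by unfold DiagCross at *; omega)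
    exact Nat.findGreatest_is_greatest (P := P) (n := b - 1) (k := d)
      (by unfold DiagCross at *; omega) (by omega) ⟨by omega, Or.inr (Or.inr hq)⟩
  · by_cases hcx : c < x
    · exact hPx.not_diagCross hD hq (by unfold DiagCross at *; omega)
    · exact hab.not_diagCross hD hq (by unfold DiagCross at *; omega)

end IsChord

def quadSides (v u x w : ℕ) : List (ℕ × ℕ) := [(v, u), (u, x), (x, w), (v, w)]

theorem eq_diagonal_of_forall_not_diagCross_quadSides {v u x w : ℕ} (hvu : v < u) (hux : u < x)
    (hxw : x < w) {q : ℕ × ℕ} (hq : ∀ s ∈ quadSides v u x w, ¬ DiagCross s q) :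
    (DiagCross (v, x) q → q = (u, w)) ∧ (DiagCross (u, w) q → q = (v, x)) := by
  simp only [quadSides, List.mem_cons, List.not_mem_nil, or_false, forall_eq_or_imp,
    forall_eq] at hq
  obtain ⟨c, d⟩ := q
  unfold DiagCross at *
  simp only [Prod.mk.injEq]
  omega

theorem Finset.card_sdiff_insert_erase {α : Type*} [DecidableEq α] {s : Finset α} {a b : α}
    (ha : a ∉ s) (hb : b ∈ s) :
    (s \ insert a (s.erase b)).card = 1 ∧ (insert a (s.erase b) \ s).card = 1 := by
  rw [card_eq_one, card_eq_one]
  exact ⟨⟨b, by ext; grind⟩, ⟨a, by ext; grind⟩⟩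

section Flip

variable {N : ℕ} {D : Finset (ℕ × ℕ)} {v u x w : ℕ}

theorem isPolygonTriangulation_flip (hD : IsPolygonTriangulation N D) (hvu : v < u)
    (hux : u < x) (hxw : x < w) (hwN : w < N)
    (hsides : ∀ s ∈ quadSides v u x w, IsChord N D s) :
    IsPolygonTriangulation N (insert (v, x) (D.erase (u, w))) := by
  have hsides' : ∀ s ∈ quadSides v u x w, IsChord N (insert (v, x) (D.erase (u, w))) s := by
    intro s hs
    have hne : s ≠ (u, w) := by
      simp only [quadSides, List.mem_cons, List.not_mem_nil, or_false] at hs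
      rcases hs with rfl | rfl | rfl | rfl <;> simp only [ne_eq, Prod.mk.injEq] <;> omega
    exact (hsides s hs).subset fun h => mem_insert_of_mem (mem_erase.2 ⟨hne, h⟩)
  have hnew : ∀ q ∈ D.erase (u, w), ¬ DiagCross (v, x) q := fun q hq hcross =>
    (mem_erase.1 hq).1 ((eq_diagonal_of_forall_not_diagCross_quadSides hvu hux hxw
      fun s hs => (hsides s hs).not_diagCross hD (mem_of_mem_erase hq)).1 hcross)
  refine ⟨?_, ?_, ?_⟩
  · simp only [forall_mem_insert]
    exact ⟨⟨by omega, by omega, by omega, by omega⟩,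
      fun p hp => hD.1 p (mem_of_mem_erase hp)⟩
  · intro p hp q hq
    rw [mem_insert] at hp hq
    rcases hp with rfl | hp <;> rcases hq with rfl | hq
    · exact not_diagCross_self _
    · exact hnew q hq
    · exact fun h => hnew p hp (diagCross_comm.1 h)
    · exact hD.2.1 p (mem_of_mem_erase hp) q (mem_of_mem_erase hq)
  · intro p hp hpD'
    by_contra! hnone
    by_cases hpuw : p = (u, w)
    · subst hpuw
      exact hnone _ (mem_insert_self _ _) (Or.inr ⟨hvu, hux, hxw⟩)
    have hpD : p ∉ D := fun h => hpD' (mem_insert_of_mem (mem_erase.2 ⟨hpuw, h⟩))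
    obtain ⟨q, hq, hpq⟩ := hD.2.2 p hp hpD
    by_cases hquw : q = (u, w)
    · subst hquw
      have hside : ∀ s ∈ quadSides v u x w, ¬ DiagCross s p := fun s hs hsp =>
        hnone s ((hsides' s hs).mem_of_diagCross hsp hp.2.1) (diagCross_comm.1 hsp)
      rw [(eq_diagonal_of_forall_not_diagCross_quadSides hvu hux hxw hside).2
        (diagCross_comm.1 hpq)] at hpD'
      exact hpD' (mem_insert_self _ _)
    · exact hnone q (mem_insert_of_mem (mem_erase.2 ⟨hquw, hq⟩)) hpq

theorem flipAdj_flip (hD : IsPolygonTriangulation N D) (hvu : v < u) (hux : u < x)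
    (hxw : x < w) (hwN : w < N) (hsides : ∀ s ∈ quadSides v u x w, IsChord N D s)
    (huw : (u, w) ∈ D) : FlipAdj N D (insert (v, x) (D.erase (u, w))) :=
  have hvx : (v, x) ∉ D := fun h => hD.2.1 _ h _ huw (Or.inl ⟨hvu, hux, hxw⟩)
  ⟨hD, isPolygonTriangulation_flip hD hvu hux hxw hwN hsides,
    card_sdiff_insert_erase hvx huw⟩

end Flip

section Fan

variable {N : ℕ} {D : Finset (ℕ × ℕ)}

theorem exists_fan_gap (hD : IsPolygonTriangulation N D) {p : ℕ × ℕ} (hp : p ∈ D)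
    (hp0 : p.1 ≠ 0) :
    ∃ u w, 0 < u ∧ u + 1 < w ∧ w < N ∧ IsChord N D (0, u) ∧ IsChord N D (0, w) ∧
      (u, w) ∈ D := by
  have hpdiag := hD.1 p hp
  unfold IsDiag at hpdiag
  have hgap : ¬ IsChord N D (0, p.1 + 1) := by
    rintro (h | h | h)
    · exact hp0 (by simpa using h)
    · omega
    · exact hD.2.1 _ h _ hp (Or.inl ⟨by omega, by omega, by omega⟩)
  obtain ⟨u, w, hu, huj, hjw, hwN, h0u, h0w, hbetween⟩ :=
    Nat.exists_consecutive_around (P := fun i => IsChord N D (0, i)) (a := 1) (b := N - 1)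
      (Or.inl rfl) (Or.inr (Or.inl ⟨rfl, rfl⟩)) (by omega) (by omega) hgap
  have huw : IsChord N D (u, w) := by
    refine .of_forall_not_diagCross hD (by omega) (by omega) ?_
    rintro ⟨c, d⟩ hq hcross
    have hcd := hD.1 _ hq
    unfold IsDiag at hcd
    rcases Nat.eq_zero_or_pos c with rfl | hc
    · exact hbetween d (by unfold DiagCross at hcross; omega)
        (by unfold DiagCross at hcross; omega) (Or.inr (Or.inr hq))
    · by_cases hcu : c < u
      · exact h0u.not_diagCross hD hq (by unfold DiagCross at *; omega)
      · exact h0w.not_diagCross hD hq (by unfold DiagCross at *; omega)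
  refine ⟨u, w, by omega, by omega, by omega, h0u, h0w, ?_⟩
  rcases huw with h | h | h
  · omega
  · omega
  · exact h

theorem exists_flipAdj_card_filter_lt (hD : IsPolygonTriangulation N D) {p : ℕ × ℕ}
    (hp : p ∈ D) (hp0 : p.1 ≠ 0) :
    ∃ D', FlipAdj N D D' ∧ (D'.filter (·.1 ≠ 0)).card < (D.filter (·.1 ≠ 0)).card := by
  obtain ⟨u, w, hu, huw, hwN, h0u, h0w, huwD⟩ := exists_fan_gap hD hp hp0
  obtain ⟨x, hux, hxw, hchord_ux, hchord_xw⟩ :=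
    IsChord.exists_apex hD (Or.inr (Or.inr huwD)) huw hwN
  have hsides : ∀ s ∈ quadSides 0 u x w, IsChord N D s := by
    simp only [quadSides, List.mem_cons, List.not_mem_nil, or_false, forall_eq_or_imp,
      forall_eq]
    exact ⟨h0u, hchord_ux, hchord_xw, h0w⟩
  refine ⟨_, flipAdj_flip hD hu hux hxw hwN hsides huwD, ?_⟩
  rw [filter_insert, if_neg (by simp), filter_erase]
  exact card_erase_lt_of_mem (mem_filter.2 ⟨huwD, hu.ne'⟩)

theorem eq_fanTriangulation_of_forall_fst_eq_zero (hD : IsPolygonTriangulation N D)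
    (h0 : ∀ p ∈ D, p.1 = 0) : D = FanTriangulation N := by
  ext ⟨a, b⟩
  simp only [FanTriangulation, mem_image, mem_Ico, Prod.mk.injEq]
  constructor
  · intro hp
    have hdiag := hD.1 _ hp
    have ha := h0 _ hp
    unfold IsDiag at hdiag
    exact ⟨b, ⟨by omega, by omega⟩, ha.symm, rfl⟩
  · rintro ⟨c, ⟨hc2, hcN⟩, rfl, rfl⟩
    have hchord : IsChord N D (0, c) := .of_forall_not_diagCross hD (by omega) (by omega)
      fun q hq hcross => by have := h0 q hq; unfold DiagCross at hcross; omega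
    rcases hchord with h | h | h
    · omega
    · omega
    · exact h

theorem reflTransGen_flipAdj_fanTriangulation (hD : IsPolygonTriangulation N D) :
    Relation.ReflTransGen (FlipAdj N) D (FanTriangulation N) := by
  induction hn : (D.filter (·.1 ≠ 0)).card using Nat.strong_induction_on generalizing D with
  | _ n ih =>
  by_cases h : ∀ p ∈ D, p.1 = 0
  · rw [eq_fanTriangulation_of_forall_fst_eq_zero hD h]
  obtain ⟨p, hp, hp0⟩ := not_forall₂.1 h
  obtain ⟨D', hflip, hlt⟩ := exists_flipAdj_card_filter_lt hD hp hp0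
  exact .head hflip (ih _ (hn ▸ hlt) hflip.2.1 rfl)

theorem card_fanTriangulation (N : ℕ) : (FanTriangulation N).card = N - 3 := by
  rw [FanTriangulation, card_image_of_injective _ (Prod.mk_right_injective 0), Nat.card_Ico]
  omega

end Fan

theorem FlipAdj.card_eq {N : ℕ} {D D' : Finset (ℕ × ℕ)} (h : FlipAdj N D D') :
    D.card = D'.card := by
  have h₁ := card_sdiff_add_card_inter D D'
  have h₂ := card_sdiff_add_card_inter D' D
  rw [inter_comm, h.2.2.2] at h₂
  rw [h.2.2.1] at h₁
  omega

theorem card_eq_of_reflTransGen_flipAdj {N : ℕ} {D D' : Finset (ℕ × ℕ)}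
    (h : Relation.ReflTransGen (FlipAdj N) D D') : D.card = D'.card := by
  induction h with
  | refl => rfl
  | tail _ hflip ih => exact ih.trans hflip.card_eq

theorem flips_to_fan_and_card_general (N : ℕ) (D : Finset (ℕ × ℕ))
    (hD : IsPolygonTriangulation N D) :
    Relation.ReflTransGen (FlipAdj N) D (FanTriangulation N) ∧ D.card = N - 3 := by
  have hflips := reflTransGen_flipAdj_fanTriangulation hD
  exact ⟨hflips, (card_eq_of_reflTransGen_flipAdj hflips).trans (card_fanTriangulation N)⟩

/-- Every triangulation of a convex polygon with `N ≥ 4` vertices can be transformed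
by finitely many flips into the fan triangulation at the vertex `0`, and every
triangulation has exactly `N - 3` diagonals. -/
theorem flips_to_fan_and_card (N : ℕ) (hN : 4 ≤ N) (D : Finset (ℕ × ℕ))
    (hD : IsPolygonTriangulation N D) :
    Relation.ReflTransGen (FlipAdj N) D (FanTriangulation N) ∧ D.card = N - 3 :=
  flips_to_fan_and_card_general N D hD
end
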